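/- arXiv:0712.2408 — 3 statements merged into one kernel-verified Lean document; each statement's English description precedes it below -/
import Mathlib

section
/- For every real number t in [-1, 1], with T_n denoting the monic Chebyshev polynomial T_n(2cos θ) = 2cos(nθ), we have T_2(t) + 2 = 4·sin²((1/3)·arcsin(√((T_6(t)+2)/4))). -/
/-- Monic Chebyshev polynomial of the first kind: `Tm n (2 cos θ) = 2 cos (n θ)`. -/
noncomputable def Tm (n : ℤ) (x : ℝ) : ℝ := 2 * (Polynomial.Chebyshev.T ℝ n).eval (x / 2)

/-!
Put `t = 2 sin a` with `a = arcsin (t / 2) ∈ [-π/6, π/6]`. Since `T₆ = T₂ ∘ T₃` and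
`T₃(2 sin a) = -2 sin 3a`, we get `(T₆(t) + 2) / 4 = sin² 3a`; as `|3a| ≤ π/2` the
arcsin of `|sin 3a|` is `3|a|`, and `4 sin² |a| = t² = T₂(t) + 2`.
-/

open Polynomial Real

lemma Tm_mul (m n : ℤ) (x : ℝ) : Tm (m * n) x = Tm m (Tm n x) := by
  simp [Tm, Chebyshev.T_mul]

lemma Tm_two (x : ℝ) : Tm 2 x = x ^ 2 - 2 := by
  simp only [Tm, Chebyshev.T_two, eval_sub, eval_mul, eval_pow, eval_X, eval_ofNat, eval_one]
  ring

lemma Tm_three (x : ℝ) : Tm 3 x = x ^ 3 - 3 * x := by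
  have hT3 : Chebyshev.T ℝ 3 = 2 * X * Chebyshev.T ℝ 2 - Chebyshev.T ℝ 1 :=
    Chebyshev.T_add_two ℝ 1
  simp only [Tm, hT3, Chebyshev.T_two, Chebyshev.T_one, eval_sub, eval_mul, eval_pow, eval_X,
    eval_ofNat, eval_one]
  ring

lemma Tm_three_two_mul_sin (a : ℝ) : Tm 3 (2 * sin a) = -(2 * sin (3 * a)) := by
  rw [Tm_three, sin_three_mul]
  ring

lemma Real.abs_arcsin_le_of_abs_le_sin {x y : ℝ} (hy : y ∈ Set.Ico 0 (π / 2))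
    (hx : |x| ≤ sin y) : |arcsin x| ≤ y := by
  obtain ⟨hy₀, hy₁⟩ := hy
  refine abs_le.2 ⟨(le_arcsin_iff_sin_le' ⟨by linarith, by linarith⟩).2 ?_,
    (arcsin_le_iff_le_sin' ⟨by linarith, hy₁⟩).2 ((le_abs_self x).trans hx)⟩
  rw [sin_neg]
  linarith [neg_abs_le x]

lemma Real.arcsin_abs_sin {x : ℝ} (hx : |x| ≤ π / 2) : arcsin |sin x| = |x| := by
  rw [abs_sin_eq_sin_abs_of_abs_le_pi (by linarith [pi_pos])]
  exact arcsin_sin (by linarith [abs_nonneg x, pi_pos]) hx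

theorem stmt_3 (t : ℝ) (ht : t ∈ Set.Icc (-1 : ℝ) 1) :
    Tm 2 t + 2 =
      4 * Real.sin ((1 / 3) * Real.arcsin (Real.sqrt ((Tm 6 t + 2) / 4))) ^ 2 := by
  obtain ⟨ht₁, ht₂⟩ := ht
  set a := arcsin (t / 2)
  have ht_eq : t = 2 * sin a := by
    rw [sin_arcsin (by linarith) (by linarith)]; ring
  have ha : |a| ≤ π / 6 := abs_arcsin_le_of_abs_le_sin ⟨by positivity, by linarith [pi_pos]⟩
    (by rw [sin_pi_div_six, abs_div, abs_two]; linarith [abs_le.2 ⟨ht₁, ht₂⟩])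
  have h3a : |3 * a| = 3 * |a| := by rw [abs_mul, abs_of_pos three_pos]
  have hsqrt : √((Tm 6 t + 2) / 4) = |sin (3 * a)| := by
    rw [show (6 : ℤ) = 2 * 3 from rfl, Tm_mul, Tm_two, ht_eq, Tm_three_two_mul_sin,
      ← sqrt_sq_eq_abs]
    ring_nf
  rw [hsqrt, arcsin_abs_sin (by rw [h3a]; linarith), h3a, one_div,
    inv_mul_cancel_left₀ three_ne_zero, ← abs_sin_eq_sin_abs_of_abs_le_pi (by linarith [pi_pos]),
    sq_abs, Tm_two, ht_eq]
  ring
end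

section
/- Let φ_1 = 4/9 and φ_{n+1} = (2/9)·((3n+1)(3n-1))/((n+1)(2n+1))·φ_n for n ≥ 1. Then the sequence (φ_n)_{n≥1} is totally monotone: for every k ≥ 0 and every n ≥ 1, (-1)^k (Δ^k φ)_n > 0, where (Δf)_n = f_{n+1} - f_n. -/
/-!
The ratio `Γ(n + a) / Γ(n + b)` with `0 < a < b` is totally monotone, because its negated
forward difference is `(b - a) · Γ(n + a) / Γ(n + b + 1)`, a positive multiple of a ratio of the
same kind. Totally monotone sequences are closed under products, by the Leibniz rule
`-Δ(fg)_n = (-Δf)_n g_n + f_{n+1} (-Δg)_n`. Finally the recurrence shows that `φ_{n+1}` is a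
positive multiple of `Γ(n + 4/3) / Γ(n + 2) · Γ(n + 2/3) / Γ(n + 3/2)`.
-/

/-- The coefficient sequence: `φ_1 = 4/9`,
`φ_{n+1} = (2/9)·((3n+1)(3n-1))/((n+1)(2n+1))·φ_n` for `n ≥ 1` (and `φ_0 = 0`). -/
noncomputable def phiSeq : ℕ → ℝ
  | 0 => 0
  | 1 => 4 / 9
  | (n + 2) =>
      (2 / 9) * ((3 * ((n : ℝ) + 1) + 1) * (3 * ((n : ℝ) + 1) - 1))
        / ((((n : ℝ) + 1) + 1) * (2 * ((n : ℝ) + 1) + 1)) * phiSeq (n + 1)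

/-- Forward difference operator `(Δ f)_n = f_{n+1} - f_n`. -/
def fdiff (f : ℕ → ℝ) : ℕ → ℝ := fun n => f (n + 1) - f n

open fwdDiff

section TotallyMonotone

variable {R : Type*} [CommRing R]

lemma neg_fwdDiff_mul (f g : ℕ → R) :
    -Δ_[1] (f * g) = -Δ_[1] f * g + (fun n => f (n + 1)) * -Δ_[1] g := by
  ext n
  simp only [fwdDiff, Pi.neg_apply, Pi.mul_apply, Pi.add_apply]
  ring

lemma neg_one_pow_mul_fwdDiff_iter_succ (f : ℕ → R) (k n : ℕ) :
    (-1 : R) ^ (k + 1) * ((Δ_[1])^[k + 1] f) n = (-1) ^ k * ((Δ_[1])^[k] (-Δ_[1] f)) n := by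
  rw [Function.iterate_succ_apply, ← neg_one_smul R (Δ_[1] f), fwdDiff_iter_const_smul]
  simp only [Pi.smul_apply, smul_eq_mul]
  ring

variable [PartialOrder R]

def IsTotallyMonotone (f : ℕ → R) : Prop :=
  ∀ k n, 0 < (-1 : R) ^ k * ((Δ_[1])^[k] f) n

namespace IsTotallyMonotone

variable {f g : ℕ → R}

lemma pos (hf : IsTotallyMonotone f) (n : ℕ) : 0 < f n := by
  simpa using hf 0 n

lemma neg_fwdDiff (hf : IsTotallyMonotone f) : IsTotallyMonotone (-Δ_[1] f) := fun k n => by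
  simpa only [neg_one_pow_mul_fwdDiff_iter_succ] using hf (k + 1) n

lemma comp_add_one (hf : IsTotallyMonotone f) : IsTotallyMonotone (fun n => f (n + 1)) :=
  fun k n => by simpa only [fwdDiff_iter_comp_add] using hf k (n + 1)

variable [IsStrictOrderedRing R]

lemma const_smul (hf : IsTotallyMonotone f) {c : R} (hc : 0 < c) :
    IsTotallyMonotone (c • f) := fun k n => by
  simpa only [fwdDiff_iter_const_smul, Pi.smul_apply, smul_eq_mul, mul_left_comm]
    using mul_pos hc (hf k n)

lemma mul (hf : IsTotallyMonotone f) (hg : IsTotallyMonotone g) :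
    IsTotallyMonotone (f * g) := by
  intro k
  induction k generalizing f g with
  | zero => intro n; simpa using mul_pos (hf.pos n) (hg.pos n)
  | succ k ih =>
    intro n
    rw [neg_one_pow_mul_fwdDiff_iter_succ, neg_fwdDiff_mul, fwdDiff_iter_add, Pi.add_apply,
      mul_add]
    exact add_pos (ih hf.neg_fwdDiff hg n) (ih hf.comp_add_one hg.neg_fwdDiff n)

end IsTotallyMonotone

end TotallyMonotone

noncomputable def gammaRatio (a b : ℝ) (n : ℕ) : ℝ := Real.Gamma (n + a) / Real.Gamma (n + b)

section GammaRatio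

variable {a b : ℝ}

lemma gammaRatio_pos (ha : 0 < a) (hb : 0 < b) (n : ℕ) : 0 < gammaRatio a b n :=
  div_pos (Real.Gamma_pos_of_pos (by positivity)) (Real.Gamma_pos_of_pos (by positivity))

lemma gammaRatio_succ (ha : 0 < a) (hb : 0 < b) (n : ℕ) :
    gammaRatio a b (n + 1) = (n + a) / (n + b) * gammaRatio a b n := by
  have hGb : Real.Gamma (n + b) ≠ 0 := (Real.Gamma_pos_of_pos (by positivity)).ne'
  simp only [gammaRatio, Nat.cast_succ, add_right_comm _ (1 : ℝ),
    Real.Gamma_add_one (by positivity : (n : ℝ) + a ≠ 0),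
    Real.Gamma_add_one (by positivity : (n : ℝ) + b ≠ 0)]
  field_simp

lemma gammaRatio_add_one_right (hb : 0 < b) (n : ℕ) :
    gammaRatio a (b + 1) n = gammaRatio a b n / (n + b) := by
  rw [gammaRatio, gammaRatio, ← add_assoc, Real.Gamma_add_one (by positivity), div_div,
    mul_comm]

lemma neg_fwdDiff_gammaRatio (ha : 0 < a) (hb : 0 < b) :
    -Δ_[1] (gammaRatio a b) = (b - a) • gammaRatio a (b + 1) := by
  ext n
  have hnb : (n : ℝ) + b ≠ 0 := by positivity
  simp only [fwdDiff, Pi.neg_apply, Pi.smul_apply, smul_eq_mul, gammaRatio_succ ha hb,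
    gammaRatio_add_one_right hb]
  field_simp
  ring

lemma isTotallyMonotone_gammaRatio (ha : 0 < a) (hab : a < b) :
    IsTotallyMonotone (gammaRatio a b) := by
  intro k
  induction k generalizing b with
  | zero => intro n; simpa using gammaRatio_pos ha (ha.trans hab) n
  | succ k ih =>
    intro n
    rw [neg_one_pow_mul_fwdDiff_iter_succ, neg_fwdDiff_gammaRatio ha (ha.trans hab),
      fwdDiff_iter_const_smul, Pi.smul_apply, smul_eq_mul, mul_left_comm]
    exact mul_pos (sub_pos.2 hab) (ih (by linarith) n)

end GammaRatio

lemma phiSeq_add_two (n : ℕ) :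
    phiSeq (n + 2) = (n + 4 / 3) / (n + 2) * ((n + 2 / 3) / (n + 3 / 2)) * phiSeq (n + 1) := by
  rw [phiSeq]
  congr 1
  field_simp
  ring

noncomputable def phiGamma : ℕ → ℝ := gammaRatio (4 / 3) 2 * gammaRatio (2 / 3) (3 / 2)

lemma isTotallyMonotone_phiGamma : IsTotallyMonotone phiGamma :=
  (isTotallyMonotone_gammaRatio (by norm_num) (by norm_num)).mul
    (isTotallyMonotone_gammaRatio (by norm_num) (by norm_num))

lemma phiSeq_succ_eq : (fun n => phiSeq (n + 1)) = (4 / 9 / phiGamma 0) • phiGamma := by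
  funext n
  induction n with
  | zero => simp [phiSeq, isTotallyMonotone_phiGamma.pos 0 |>.ne']
  | succ n ih =>
    simp only [phiGamma, Pi.smul_apply, Pi.mul_apply, smul_eq_mul] at ih ⊢
    rw [phiSeq_add_two, ih, gammaRatio_succ (by norm_num) (by norm_num),
      gammaRatio_succ (by norm_num) (by norm_num)]
    ring

theorem stmt_9 (k n : ℕ) (hn : 1 ≤ n) :
    0 < (-1 : ℝ) ^ k * (fdiff^[k] phiSeq) n := by
  obtain ⟨m, rfl⟩ := Nat.exists_eq_add_of_le' hn
  have hφ : IsTotallyMonotone (fun n => phiSeq (n + 1)) := phiSeq_succ_eq ▸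
    isTotallyMonotone_phiGamma.const_smul (div_pos (by norm_num) (isTotallyMonotone_phiGamma.pos 0))
  rw [show fdiff = Δ_[1] from rfl, ← fwdDiff_iter_comp_add]
  exact hφ k m
end

section
/- Define polynomials P_k by P_0 = 1 and P_{k+1}(X) = (X + k + 1)(2X + 2k + 1)·P_k(X) - 2(X² - 1/9)·P_k(X + 1). Then for every k ≥ 0 and every integer i with 0 ≤ i ≤ k, one has (-1)^i · P_k(-i) > 0. -/
/-- `P_0 = 1`, `P_{k+1}(X) = (X+k+1)(2X+2k+1)·P_k(X) - 2(X² - 1/9)·P_k(X+1)`. -/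
noncomputable def P : ℕ → Polynomial ℝ
  | 0 => 1
  | (k + 1) =>
      (Polynomial.X + Polynomial.C ((k : ℝ) + 1))
          * (2 * Polynomial.X + Polynomial.C (2 * (k : ℝ) + 1)) * P k
        - 2 * (Polynomial.X ^ 2 - Polynomial.C (1 / 9)) * (P k).comp (Polynomial.X + 1)

/-!
Evaluating the recursion at `X = -(j+1)` gives, with `Q k j := (-1)^j P_k(-j)`,
`Q (k+1) (j+1) = (k-j)(2k-2j-1) Q k (j+1) + 2((j+1)² - 1/9) Q k j`,
whose first coefficient is positive for `j < k` and vanishes for `j = k`. So positivity propagates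
by induction on `k`, provided `P_k(0) > 0`. At `X = 0` the recursion involves `P_k(1)` instead, and
the difference identity `P_{k+1}(x+1) - P_{k+1}(x) = (k+1)(2k+3) P_k(x+1)` shows that `P_k(0)` and
`P_k(1)` stay positive together.
-/

open Polynomial

lemma P_zero_eval (x : ℝ) : (P 0).eval x = 1 := by
  simp [P]

lemma P_succ_eval (k : ℕ) (x : ℝ) :
    (P (k + 1)).eval x
      = (x + k + 1) * (2 * x + 2 * k + 1) * (P k).eval x
        - 2 * (x ^ 2 - 1 / 9) * (P k).eval (x + 1) := by
  simp only [P, eval_sub, eval_mul, eval_add, eval_pow, eval_X, eval_C, eval_comp, eval_one,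
    eval_ofNat]
  ring

lemma P_succ_eval_add_one (k : ℕ) (x : ℝ) :
    (P (k + 1)).eval (x + 1)
      = (P (k + 1)).eval x + (k + 1) * (2 * k + 3) * (P k).eval (x + 1) := by
  induction k generalizing x with
  | zero =>
    simp only [P_succ_eval, P_zero_eval]
    push_cast
    ring
  | succ k ih =>
    have h₁ := P_succ_eval (k + 1) (x + 1)
    have h₂ := P_succ_eval (k + 1) x
    have h₃ := P_succ_eval k (x + 1)
    have h₄ := ih x
    have h₅ := ih (x + 1)
    push_cast at h₁ h₂ h₃ h₄ h₅ ⊢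
    linear_combination h₁ - h₂ + ((x + k + 2) * (2 * x + 2 * k + 3)) * h₄
      - (2 * ((x + 1) ^ 2 - 1 / 9)) * h₅ - ((k + 1) * (2 * k + 3)) * h₃

lemma P_eval_zero_pos_and_eval_one_pos (k : ℕ) : 0 < (P k).eval 0 ∧ 0 < (P k).eval 1 := by
  induction k with
  | zero => simp [P_zero_eval]
  | succ k ih =>
    obtain ⟨h₀, h₁⟩ := ih
    have hk : (0 : ℝ) ≤ k := k.cast_nonneg
    have h₀' : 0 < (P (k + 1)).eval 0 := by
      rw [P_succ_eval, zero_add]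
      nlinarith [mul_pos (by positivity : (0 : ℝ) < (k + 1) * (2 * k + 1)) h₀]
    refine ⟨h₀', ?_⟩
    have h := P_succ_eval_add_one k 0
    rw [zero_add] at h
    rw [h]
    nlinarith [mul_pos (by positivity : (0 : ℝ) < (k + 1) * (2 * k + 3)) h₁]

lemma neg_one_pow_mul_P_succ_eval_neg_succ (k j : ℕ) :
    (-1 : ℝ) ^ (j + 1) * (P (k + 1)).eval (-((j + 1 : ℕ) : ℝ))
      = (k - j) * (2 * k - 2 * j - 1) * ((-1) ^ (j + 1) * (P k).eval (-((j + 1 : ℕ) : ℝ)))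
        + 2 * ((j + 1) ^ 2 - 1 / 9) * ((-1) ^ j * (P k).eval (-(j : ℝ))) := by
  rw [P_succ_eval, show (-((j + 1 : ℕ) : ℝ)) + 1 = -j by push_cast; ring]
  push_cast
  ring

theorem stmt_11 (k i : ℕ) (hi : i ≤ k) :
    0 < (-1 : ℝ) ^ i * (P k).eval (-(i : ℝ)) := by
  induction k generalizing i with
  | zero =>
    obtain rfl := Nat.le_zero.mp hi
    simp [P_zero_eval]
  | succ k ih =>
    obtain _ | j := i
    · simpa using (P_eval_zero_pos_and_eval_one_pos (k + 1)).1
    have hj : (0 : ℝ) ≤ j := j.cast_nonneg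
    have hfirst : 0 ≤ ((k : ℝ) - j) * (2 * k - 2 * j - 1)
        * ((-1) ^ (j + 1) * (P k).eval (-((j + 1 : ℕ) : ℝ))) := by
      rcases (Nat.le_of_succ_le_succ hi).lt_or_eq with hjk | rfl
      · have hjk' : (j : ℝ) + 1 ≤ k := by exact_mod_cast hjk
        exact mul_nonneg (mul_nonneg (by linarith) (by linarith)) (ih (j + 1) hjk).le
      · simp
    have hsecond : 0 < 2 * (((j : ℝ) + 1) ^ 2 - 1 / 9) * ((-1) ^ j * (P k).eval (-(j : ℝ))) :=
      mul_pos (by nlinarith) (ih j (by omega))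
    rw [neg_one_pow_mul_P_succ_eval_neg_succ]
    linarith
end
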